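/- arXiv:1111.5228 — 7 statements merged into one kernel-verified Lean document; each statement's English description precedes it below -/
import Mathlib

section
/- Let m ≥ 3 and let G = ℝ/mℤ with its Haar probability measure. Let (R_{ij}), for ordered pairs i ≠ j with i,j ∈ {2,…,m}, be independent random variables each distributed according to the Haar (uniform) measure on G, and define Z_i = Σ_{j∈{2,…,m}, j≠i} (R_{ji} − R_{ij}) ∈ G for i = 2,…,m. Then the law of the random vector Z = (Z_2,…,Z_m) in G^{m−1} is invariant under translation by any element of the zero-sum subgroup: for every h ∈ G^{m−1} with Σ_{i=2}^m h_i = 0, the random vectors Z and Z + h have the same distribution. Equivalently, Z is uniformly distributed on the zero-sum subgroup { u ∈ G^{m−1} : Σ_{i=2}^m u_i = 0 }. -/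
open MeasureTheory ProbabilityTheory

/-!
Collect the noise variables into the random vector `r = (R p)_p`. By independence its law is the
product of the Haar measures, i.e. the Haar measure of the group `G^{pairs}`, and `Z` is the image
of `r` under the additive homomorphism `netFlow` (inflow minus outflow at each party). For a
homomorphism, `netFlow (r + c) = netFlow r + netFlow c`, so the law of `Z` is invariant under
translation by the range of `netFlow`. That range contains the whole zero-sum subgroup: to realise
`h`, let one fixed party send `h j` to every other party `j`.
-/

theorem map_add_right_map_eq_self {A B F : Type*} [AddGroup A] [MeasurableSpace A]
    [MeasurableAdd A] [Add B] [MeasurableSpace B] [MeasurableAdd B] [FunLike F A B]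
    [AddHomClass F A B] (ν : Measure A) [ν.IsAddRightInvariant] {f : F} (hf : Measurable f)
    (c : A) : (ν.map f).map (· + f c) = ν.map f := by
  conv_rhs => rw [← map_add_right_eq_self ν c]
  rw [Measure.map_map (measurable_add_const _) hf, Measure.map_map hf (measurable_add_const _)]
  congr 1
  ext a
  simp

section NetFlow

variable {ι G : Type*} [Fintype ι] [DecidableEq ι] [AddCommGroup G]

/-- `netFlow r i` is the total amount that party `i` receives minus the total it sends, when
`r ⟨(i, j), _⟩` is the amount sent from `i` to `j`. -/
def netFlow : ({p : ι × ι // p.1 ≠ p.2} → G) →+ (ι → G) :=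
  AddMonoidHom.mk' (fun r i => ∑ j ∈ Finset.univ.erase i,
      ((if h : j ≠ i then r ⟨(j, i), h⟩ else 0) - (if h : i ≠ j then r ⟨(i, j), h⟩ else 0)))
    fun r s => by
      funext i
      simp only [Pi.add_apply, ← Finset.sum_add_distrib]
      refine Finset.sum_congr rfl fun j _ => ?_
      split_ifs <;> abel

theorem exists_netFlow_eq_of_sum_eq_zero (h : ι → G) (hsum : ∑ i, h i = 0) :
    ∃ c, netFlow c = h := by
  cases isEmpty_or_nonempty ι with
  | inl => exact ⟨0, Subsingleton.elim _ _⟩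
  | inr =>
    obtain ⟨i₀⟩ := ‹Nonempty ι›
    refine ⟨fun p => if p.1.1 = i₀ then h p.1.2 else 0, funext fun i => ?_⟩
    calc netFlow _ i
        = ∑ j ∈ Finset.univ.erase i, ((if j = i₀ then h i else 0) - if i = i₀ then h j else 0) :=
          Finset.sum_congr rfl fun j hj => by
            simp [Finset.ne_of_mem_erase hj, (Finset.ne_of_mem_erase hj).symm]
      _ = h i := by
        rw [Finset.sum_sub_distrib, Finset.sum_ite_eq']
        rcases eq_or_ne i i₀ with rfl | hi
        · have hrest : h i + ∑ j ∈ Finset.univ.erase i, h j = 0 := by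
            rw [Finset.add_sum_erase _ _ (Finset.mem_univ i), hsum]
          simp only [Finset.notMem_erase, if_false, if_true, zero_sub]
          exact (eq_neg_of_add_eq_zero_left hrest).symm
        · simp [hi, hi.symm]

theorem measurable_netFlow [MeasurableSpace G] [MeasurableAdd₂ G] [MeasurableSub₂ G] :
    Measurable (netFlow : ({p : ι × ι // p.1 ≠ p.2} → G) →+ (ι → G)) := by
  refine measurable_pi_lambda _ fun i => Finset.measurable_sum _ fun j _ => ?_
  apply Measurable.sub <;> split <;> fun_prop

end NetFlow

theorem secure_sum_noise_uniform_general (m : ℕ) [Fact ((0 : ℝ) < (m : ℝ))]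
    {Ω : Type*} [MeasurableSpace Ω] (μ : Measure Ω) [IsProbabilityMeasure μ]
    (R : {p : Fin (m - 1) × Fin (m - 1) // p.1 ≠ p.2} → Ω → AddCircle (m : ℝ))
    (hmeas : ∀ p, Measurable (R p))
    (hindep : iIndepFun R μ)
    (hunif : ∀ p, Measure.map (R p) μ = AddCircle.haarAddCircle)
    (Z : Ω → Fin (m - 1) → AddCircle (m : ℝ))
    (hZ : ∀ ω i, Z ω i =
      ∑ j ∈ Finset.univ.erase i,
        ((if h : j ≠ i then R ⟨(j, i), h⟩ ω else 0) -
          (if h : i ≠ j then R ⟨(i, j), h⟩ ω else 0)))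
    (h : Fin (m - 1) → AddCircle (m : ℝ)) (hsum : ∑ i, h i = 0) :
    Measure.map (fun ω i => Z ω i + h i) μ = Measure.map Z μ := by
  set r : Ω → {p : Fin (m - 1) × Fin (m - 1) // p.1 ≠ p.2} → AddCircle (m : ℝ) :=
    fun ω p => R p ω
  have hr : Measurable r := measurable_pi_lambda _ hmeas
  have hZr : Z = netFlow ∘ r := funext fun ω => funext (hZ ω)
  have hlaw : μ.map r = Measure.pi fun _ => AddCircle.haarAddCircle := by
    rw [hindep.map_fun_eq_pi_map fun p => (hmeas p).aemeasurable]
    simp_rw [hunif]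
  obtain ⟨c, rfl⟩ := exists_netFlow_eq_of_sum_eq_zero h hsum
  calc μ.map (fun ω i => Z ω i + netFlow c i)
      = ((μ.map r).map netFlow).map (· + netFlow c) := by
        rw [Measure.map_map measurable_netFlow hr, Measure.map_map (measurable_add_const _)
          (measurable_netFlow.comp hr), hZr]
        rfl
    _ = (μ.map r).map netFlow := by
        rw [hlaw]
        exact map_add_right_map_eq_self _ measurable_netFlow c
    _ = μ.map Z := by rw [Measure.map_map measurable_netFlow hr, hZr]

/-- **Uniformity of the noise in the Secure-Sum secrecy proof.**
Let `m ≥ 3`, `G = ℝ/mℤ` with its Haar probability measure, and let `(R i j)` (for ordered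
pairs `i ≠ j` of parties among `2, …, m`) be independent random variables, each Haar-uniform
on `G`.  Put `Z i = ∑_{j ≠ i} (R j i - R i j)`.  Then the law of `Z = (Z 2, …, Z m)` is
invariant under translation by any element `h` of the zero-sum subgroup of `G^(m-1)`;
equivalently, `Z` is uniform on the zero-sum subgroup. -/
theorem secure_sum_noise_uniform (m : ℕ) (hm : 3 ≤ m) [Fact ((0 : ℝ) < (m : ℝ))]
    {Ω : Type*} [MeasurableSpace Ω] (μ : Measure Ω) [IsProbabilityMeasure μ]
    (R : {p : Fin (m - 1) × Fin (m - 1) // p.1 ≠ p.2} → Ω → AddCircle (m : ℝ))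
    (hmeas : ∀ p, Measurable (R p))
    (hindep : iIndepFun R μ)
    (hunif : ∀ p, Measure.map (R p) μ = AddCircle.haarAddCircle)
    (Z : Ω → Fin (m - 1) → AddCircle (m : ℝ))
    (hZ : ∀ ω i, Z ω i =
      ∑ j ∈ Finset.univ.erase i,
        ((if h : j ≠ i then R ⟨(j, i), h⟩ ω else 0) -
          (if h : i ≠ j then R ⟨(i, j), h⟩ ω else 0)))
    (h : Fin (m - 1) → AddCircle (m : ℝ)) (hsum : ∑ i, h i = 0) :
    Measure.map (fun ω i => Z ω i + h i) μ = Measure.map Z μ :=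
  secure_sum_noise_uniform_general m μ R hmeas hindep hunif Z hZ h hsum
end

section
/- (Secrecy of the Secure-Sum protocol.) Let m ≥ 2 and let G = ℝ/mℤ with its Haar probability measure. Let (R_{ij})_{i≠j, i,j∈{1,…,m}} be independent random variables each distributed according to the Haar (uniform) measure on G, and for inputs x ∈ G^m define S_i(x) = x_i + Σ_{j≠i} R_{ji} − Σ_{j≠i} R_{ij} ∈ G. Define the view of party 1 on input x as the random tuple View_1(x) = ( (R_{1j})_{j≠1}, (R_{j1})_{j≠1}, (S_1(x),…,S_m(x)) ). Then for any two input vectors x, x' ∈ G^m with x_1 = x'_1 and x_1 + ⋯ + x_m = x'_1 + ⋯ + x'_m in G, the random tuples View_1(x) and View_1(x') have the same distribution. Hence the distribution of party 1's view depends on the inputs only through x_1 and the sum s = Σ_i x_i. -/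
open MeasureTheory ProbabilityTheory Finset

/-! Write `d = x' - x`; then `d 0 = 0` and `∑ i, d i = 0`. If the party with index `1` additionally
sends `d j` to every other party `j`, no message to or from the viewing party (index `0`) changes
(as `d 0 = 0`), and the revealed values change by exactly `d` (as `∑ i, d i = 0`). So the view on
input `x'` with randomness `R` is the view on input `x` with randomness `R + c` for a fixed shift
`c`, and `R + c` has the same law as `R` because the product Haar measure is translation
invariant. -/

theorem ProbabilityTheory.iIndepFun.map_comp_eq_map_pi {ι Ω G β : Type*} [Fintype ι]
    [MeasurableSpace Ω] [MeasurableSpace G] [MeasurableSpace β] {μ : Measure Ω}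
    {ν : Measure G} [IsProbabilityMeasure ν] {R : ι → Ω → G} (hindep : iIndepFun R μ)
    (hlaw : ∀ i, μ.map (R i) = ν) {g : (ι → G) → β} (hg : Measurable g) :
    μ.map (fun ω => g (R · ω)) = (Measure.pi fun _ => ν).map g := by
  have hmeas i : AEMeasurable (R i) μ :=
    .of_map_ne_zero (by rw [hlaw]; exact IsProbabilityMeasure.ne_zero ν)
  have hR : μ.map (fun ω i => R i ω) = Measure.pi fun _ => ν := by
    simp only [hindep.map_fun_eq_pi_map hmeas, hlaw]
  rw [← hR, AEMeasurable.map_map_of_aemeasurable hg.aemeasurable (aemeasurable_pi_lambda _ hmeas)]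
  rfl

theorem MeasureTheory.Measure.map_comp_add_right {G β : Type*} [AddGroup G] [MeasurableSpace G]
    [MeasurableAdd G] [MeasurableSpace β] (ν : Measure G) [ν.IsAddRightInvariant]
    {g : G → β} (hg : Measurable g) (c : G) : ν.map (fun r => g (r + c)) = ν.map g := by
  calc ν.map (fun r => g (r + c)) = (ν.map (· + c)).map g :=
        (Measure.map_map hg (measurable_add_const c)).symm
    _ = ν.map g := by rw [map_add_right_eq_self]

namespace SecureSum

variable {ι G : Type*} [DecidableEq ι] [AddCommGroup G]

abbrev OffDiag (ι : Type*) := {p : ι × ι // p.1 ≠ p.2}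

def toMatrix (r : OffDiag ι → G) (i j : ι) : G :=
  if h : i ≠ j then r ⟨(i, j), h⟩ else 0

lemma toMatrix_add (r s : OffDiag ι → G) (i j : ι) :
    toMatrix (r + s) i j = toMatrix r i j + toMatrix s i j := by
  simp only [toMatrix, Pi.add_apply, dite_add_dite, add_zero]

@[fun_prop]
lemma measurable_toMatrix_apply [MeasurableSpace G] (i j : ι) :
    Measurable fun r : OffDiag ι → G => toMatrix r i j := by
  by_cases h : i ≠ j
  · simpa only [toMatrix, dif_pos h] using measurable_pi_apply _
  · simp only [toMatrix, dif_neg h, measurable_const]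

def transfer (k : ι) (d : ι → G) (p : OffDiag ι) : G :=
  if p.1.1 = k then d p.1.2 else 0

lemma toMatrix_transfer (k : ι) (d : ι → G) {i j : ι} (hij : i ≠ j) :
    toMatrix (transfer k d) i j = if i = k then d j else 0 := by
  simp [toMatrix, transfer, hij]

variable [Fintype ι]

def netFlow (r : OffDiag ι → G) (i : ι) : G :=
  (∑ j ∈ univ.erase i, toMatrix r j i) - ∑ j ∈ univ.erase i, toMatrix r i j

lemma netFlow_add (r s : OffDiag ι → G) :
    netFlow (r + s) = netFlow r + netFlow s := by
  ext i
  simp only [netFlow, toMatrix_add, sum_add_distrib, Pi.add_apply]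
  abel

lemma netFlow_transfer (k : ι) {d : ι → G} (hd : ∑ i, d i = 0) :
    netFlow (transfer k d) = d := by
  ext i
  have h_in : ∑ j ∈ univ.erase i, toMatrix (transfer k d) j i = if i = k then 0 else d i := by
    rw [sum_congr rfl fun j hj => toMatrix_transfer k d (ne_of_mem_erase hj)]
    simp [eq_comm]
  have h_out : ∑ j ∈ univ.erase i, toMatrix (transfer k d) i j = if i = k then -d i else 0 := by
    rw [sum_congr rfl fun j hj => toMatrix_transfer k d (ne_of_mem_erase hj).symm]
    split_ifs
    · rw [eq_neg_iff_add_eq_zero, sum_erase_add _ _ (mem_univ i), hd]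
    · simp
  rw [netFlow, h_in, h_out]
  split_ifs <;> simp

@[fun_prop]
lemma measurable_netFlow [MeasurableSpace G] [MeasurableAdd₂ G] [MeasurableSub₂ G] :
    Measurable (netFlow : (OffDiag ι → G) → ι → G) := by
  refine measurable_pi_lambda _ fun i => ?_
  unfold netFlow
  fun_prop

def view (a : ι) (x : ι → G) (r : OffDiag ι → G) :
    ({j // j ≠ a} → G) × ({j // j ≠ a} → G) × (ι → G) :=
  (fun j => r ⟨(a, j), j.2.symm⟩, fun j => r ⟨(j, a), j.2⟩, x + netFlow r)

lemma view_add_eq_view_add_transfer {a k : ι} (hka : k ≠ a) {d : ι → G} (hda : d a = 0)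
    (hd : ∑ i, d i = 0) (x : ι → G) (r : OffDiag ι → G) :
    view a (x + d) r = view a x (r + transfer k d) := by
  simp only [view, netFlow_add, netFlow_transfer k hd, Prod.mk.injEq]
  refine ⟨?_, ?_, by abel⟩ <;> funext j <;> simp [transfer, hka.symm, hda]

lemma measurable_view [MeasurableSpace G] [MeasurableAdd₂ G] [MeasurableSub₂ G]
    (a : ι) (x : ι → G) : Measurable (view a x) := by
  unfold view
  fun_prop

lemma map_view_add_eq [MeasurableSpace G] [MeasurableAdd₂ G] [MeasurableSub₂ G]
    {Ω : Type*} [MeasurableSpace Ω] {μ : Measure Ω} {ν : Measure G} [IsProbabilityMeasure ν]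
    [ν.IsAddLeftInvariant] {R : OffDiag ι → Ω → G} (hindep : iIndepFun R μ)
    (hlaw : ∀ p, μ.map (R p) = ν) {a k : ι} (hka : k ≠ a) {d : ι → G} (hda : d a = 0)
    (hd : ∑ i, d i = 0) (x : ι → G) :
    μ.map (fun ω => view a (x + d) (R · ω)) = μ.map (fun ω => view a x (R · ω)) := by
  simp only [view_add_eq_view_add_transfer hka hda hd]
  rw [hindep.map_comp_eq_map_pi hlaw (measurable_view a x)]
  exact hindep.map_comp_eq_map_pi hlaw ((measurable_view a x).comp (measurable_add_const _)) |>.trans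
    (Measure.map_comp_add_right _ (measurable_view a x) _)

end SecureSum

/-- **Secrecy of the Secure-Sum protocol (Theorem 3).**
Let `m ≥ 2`, `G = ℝ/mℤ` with its Haar probability measure, and let `(R i j)` (for ordered
pairs `i ≠ j` of parties in `{1, …, m}`, party `1` being index `0`) be independent random
variables, each Haar-uniform on `G`.  For inputs `x ∈ G^m`, party `i` reveals
`S_i(x) = x i + ∑_{j≠i} R j i - ∑_{j≠i} R i j`.  The view of party `1` consists of the
numbers `R 1 j` it sent, the numbers `R j 1` it received, and the revealed values
`(S_1(x), …, S_m(x))`.  Then for any inputs `x, x'` with `x 1 = x' 1` and the same total sum,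
the views `View_1(x)` and `View_1(x')` have the same distribution. -/
theorem secure_sum_secrecy (m : ℕ) (hm : 2 ≤ m) [Fact ((0 : ℝ) < (m : ℝ))]
    {Ω : Type*} [MeasurableSpace Ω] (μ : Measure Ω)
    (R : {p : Fin m × Fin m // p.1 ≠ p.2} → Ω → AddCircle (m : ℝ))
    (hindep : iIndepFun R μ)
    (hunif : ∀ p, Measure.map (R p) μ = AddCircle.haarAddCircle)
    (S : (Fin m → AddCircle (m : ℝ)) → Ω → Fin m → AddCircle (m : ℝ))
    (hS : ∀ x ω i, S x ω i = x i +
      (∑ j ∈ Finset.univ.erase i, (if h : j ≠ i then R ⟨(j, i), h⟩ ω else 0)) -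
      ∑ j ∈ Finset.univ.erase i, (if h : i ≠ j then R ⟨(i, j), h⟩ ω else 0))
    (View₁ : (Fin m → AddCircle (m : ℝ)) → Ω →
      ({j : Fin m // j ≠ (⟨0, by omega⟩ : Fin m)} → AddCircle (m : ℝ)) ×
      ({j : Fin m // j ≠ (⟨0, by omega⟩ : Fin m)} → AddCircle (m : ℝ)) ×
      (Fin m → AddCircle (m : ℝ)))
    (hView : ∀ x ω, View₁ x ω =
      (fun j : {j : Fin m // j ≠ (⟨0, by omega⟩ : Fin m)} => R ⟨((⟨0, by omega⟩ : Fin m), j.1), Ne.symm j.2⟩ ω,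
       fun j : {j : Fin m // j ≠ (⟨0, by omega⟩ : Fin m)} => R ⟨(j.1, (⟨0, by omega⟩ : Fin m)), j.2⟩ ω,
       S x ω))
    (x x' : Fin m → AddCircle (m : ℝ)) (h1 : x ⟨0, by omega⟩ = x' ⟨0, by omega⟩)
    (hxx' : ∑ i, x i = ∑ i, x' i) :
    Measure.map (View₁ x) μ = Measure.map (View₁ x') μ := by
  have hView_eq y : View₁ y = fun ω => SecureSum.view ⟨0, by omega⟩ y (R · ω) := by
    funext ω
    rw [hView]
    simp only [SecureSum.view, Prod.mk.injEq, true_and]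
    funext i
    rw [hS, add_sub_assoc]
    rfl
  rw [← add_sub_cancel x x', hView_eq, hView_eq]
  exact (SecureSum.map_view_add_eq hindep hunif (k := ⟨1, by omega⟩) (by simp) (by simp [h1])
    (by simp [Finset.sum_sub_distrib, hxx']) x).symm
end

section
/- Let n ≥ 1, m ≥ 2, and work in ZMod n. Let (R_{ij})_{i≠j, i,j∈{1,…,m}} be independent uniform random variables on ZMod n, and for inputs x ∈ (ZMod n)^m define S_i(x) = x_i + Σ_{j≠i} R_{ji} − Σ_{j≠i} R_{ij}. Define the view of party 1 on input x as the tuple View_1(x) = ( (R_{1j})_{j≠1}, (R_{j1})_{j≠1}, (S_1(x),…,S_m(x)) ). Then for any x, x' ∈ (ZMod n)^m with x_1 = x'_1 and Σ_i x_i = Σ_i x'_i, the random tuples View_1(x) and View_1(x') have the same distribution. -/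
/-!
Party 1 sees only the messages on its own channels and the revealed values. Shifting the
random messages by the vector `c` in which party 2 sends `x_j - x'_j` more to every other
party `j` leaves party 1's channels untouched (as `x_1 = x'_1`) and turns the revealed values
for `x'` into those for `x` (as `∑ j, (x_j - x'_j) = 0`). The messages are jointly uniform on a
finite group, whose uniform measure is translation invariant, so both views have the same law.
-/

open MeasureTheory ProbabilityTheory Finset

namespace ProbabilityTheory

variable {Ω G : Type*} [MeasurableSpace Ω] [MeasurableSpace G] {μ : Measure Ω}

instance isAddRightInvariant_uniformOn_univ [AddGroup G] [MeasurableAdd G] :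
    (uniformOn (Set.univ : Set G)).IsAddRightInvariant := by
  rw [uniformOn, cond, Measure.restrict_univ]
  infer_instance

lemma iIndepFun.map_fun_eq_uniformOn_univ {ι : Type*} [Fintype ι] [Finite G]
    [MeasurableSingletonClass G] {X : ι → Ω → G}
    (hX : ∀ i, Measurable (X i)) (hindep : iIndepFun X μ)
    (hunif : ∀ i, μ.map (X i) = uniformOn Set.univ) :
    μ.map (fun ω i => X i ω) = uniformOn Set.univ := by
  rw [hindep.map_fun_eq_pi_map fun i => (hX i).aemeasurable, funext hunif, ← uniformOn_pi,
    Set.pi_univ]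

lemma identDistrib_add_const_of_map_eq_uniformOn_univ [AddGroup G] [MeasurableAdd G]
    {X : Ω → G} (hX : Measurable X) (hlaw : μ.map X = uniformOn Set.univ) (c : G) :
    IdentDistrib (fun ω => X ω + c) X μ μ where
  aemeasurable_fst := (hX.add_const c).aemeasurable
  aemeasurable_snd := hX.aemeasurable
  map_eq := ((measurePreserving_add_right _ c).comp ⟨hX, hlaw⟩).map_eq.trans hlaw.symm

end ProbabilityTheory

namespace SecureSum

variable {ι A : Type*} [Fintype ι] [DecidableEq ι] [AddCommGroup A]

/-- `r ⟨(i, j), _⟩` is the amount party `i` sends to party `j`. -/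
def netInflow (r : {p : ι × ι // p.1 ≠ p.2} → A) (i : ι) : A :=
  (∑ j ∈ univ.erase i, if h : j ≠ i then r ⟨(j, i), h⟩ else 0) -
    ∑ j ∈ univ.erase i, if h : i ≠ j then r ⟨(i, j), h⟩ else 0

lemma netInflow_add (r s : {p : ι × ι // p.1 ≠ p.2} → A) :
    netInflow (r + s) = netInflow r + netInflow s := by
  funext i
  have dite_add (p : Prop) [Decidable p] (f g : p → A) :
      (if h : p then f h + g h else 0) = (if h : p then f h else 0) + if h : p then g h else 0 := by
    split_ifs <;> simp
  simp only [netInflow, Pi.add_apply, dite_add, sum_add_distrib]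
  abel

def transfersFrom (a : ι) (d : ι → A) : {p : ι × ι // p.1 ≠ p.2} → A :=
  fun p => if p.1.1 = a then d p.1.2 else 0

lemma netInflow_transfersFrom (a : ι) (d : ι → A) :
    netInflow (transfersFrom a d) = d - Pi.single a (∑ j, d j) := by
  funext i
  simp only [netInflow, transfersFrom, dite_eq_ite]
  rw [sum_ite_of_true fun j hj => ne_of_mem_erase hj,
    sum_ite_of_true fun j hj => (ne_of_mem_erase hj).symm]
  by_cases hi : i = a
  · subst hi
    simp [sum_erase_eq_sub]
  · simp [hi, Ne.symm hi]

end SecureSum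

open SecureSum

/-- **Secrecy of the finite-field Secure-Sum protocol.**
Let `n ≥ 1`, `m ≥ 2`, and let `(R i j)` (for ordered pairs `i ≠ j` in `{1, …, m}`, party `1`
being index `0`) be independent random variables, each uniform on `ZMod n`.  For inputs
`x ∈ (ZMod n)^m`, party `i` reveals `S_i(x) = x i + ∑_{j≠i} R j i - ∑_{j≠i} R i j`, and the
view of party `1` consists of the numbers `R 1 j` it sent, the numbers `R j 1` it received,
and the revealed values `(S_1(x), …, S_m(x))`.  Then for any inputs `x, x'` with
`x 1 = x' 1` and `∑ i, x i = ∑ i, x' i`, the views `View_1(x)` and `View_1(x')` have the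
same distribution. -/
theorem secure_sum_zmod_secrecy (n m : ℕ) (hn : 1 ≤ n) (hm : 2 ≤ m)
    {Ω : Type*} [MeasurableSpace Ω] (μ : Measure Ω)
    (R : {p : Fin m × Fin m // p.1 ≠ p.2} → Ω → ZMod n)
    (hmeas : ∀ p, Measurable (R p))
    (hindep : iIndepFun R μ)
    (hunif : ∀ p, Measure.map (R p) μ = uniformOn (Set.univ : Set (ZMod n)))
    (S : (Fin m → ZMod n) → Ω → Fin m → ZMod n)
    (hS : ∀ x ω i, S x ω i = x i +
      (∑ j ∈ Finset.univ.erase i, (if h : j ≠ i then R ⟨(j, i), h⟩ ω else 0)) -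
      ∑ j ∈ Finset.univ.erase i, (if h : i ≠ j then R ⟨(i, j), h⟩ ω else 0))
    (View₁ : (Fin m → ZMod n) → Ω →
      ({j : Fin m // j ≠ (⟨0, by omega⟩ : Fin m)} → ZMod n) ×
      ({j : Fin m // j ≠ (⟨0, by omega⟩ : Fin m)} → ZMod n) ×
      (Fin m → ZMod n))
    (hView : ∀ x ω, View₁ x ω =
      (fun j : {j : Fin m // j ≠ (⟨0, by omega⟩ : Fin m)} =>
         R ⟨((⟨0, by omega⟩ : Fin m), j.1), Ne.symm j.2⟩ ω,
       fun j : {j : Fin m // j ≠ (⟨0, by omega⟩ : Fin m)} =>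
         R ⟨(j.1, (⟨0, by omega⟩ : Fin m)), j.2⟩ ω,
       S x ω))
    (x x' : Fin m → ZMod n)
    (h1 : x ⟨0, by omega⟩ = x' ⟨0, by omega⟩)
    (hxx' : ∑ i, x i = ∑ i, x' i) :
    Measure.map (View₁ x) μ = Measure.map (View₁ x') μ := by
  have : NeZero n := ⟨by omega⟩
  let X : Ω → {p : Fin m × Fin m // p.1 ≠ p.2} → ZMod n := fun ω p => R p ω
  let V (y : Fin m → ZMod n) (r : {p : Fin m × Fin m // p.1 ≠ p.2} → ZMod n) :
      ({j : Fin m // j ≠ (⟨0, by omega⟩ : Fin m)} → ZMod n) ×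
      ({j : Fin m // j ≠ (⟨0, by omega⟩ : Fin m)} → ZMod n) × (Fin m → ZMod n) :=
    (fun j => r ⟨(⟨0, by omega⟩, j.1), Ne.symm j.2⟩, fun j => r ⟨(j.1, ⟨0, by omega⟩), j.2⟩,
      y + netInflow r)
  have hV (y : Fin m → ZMod n) : View₁ y = V y ∘ X := by
    funext ω
    rw [hView]
    exact Prod.ext rfl (Prod.ext rfl (funext fun i => (hS y ω i).trans (add_sub_assoc _ _ _)))
  let c := transfersFrom (⟨1, by omega⟩ : Fin m) (x - x')
  have hc_out (j : Fin m) (h : ⟨0, by omega⟩ ≠ j) : c ⟨(⟨0, by omega⟩, j), h⟩ = 0 :=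
    if_neg (by simp [Fin.ext_iff])
  have hc_in (j : Fin m) (h : j ≠ ⟨0, by omega⟩) : c ⟨(j, ⟨0, by omega⟩), h⟩ = 0 := by
    simp [c, transfersFrom, h1]
  have hc_net : netInflow c = x - x' := by
    rw [netInflow_transfersFrom, show ∑ j, (x - x') j = 0 by simp [sum_sub_distrib, hxx'],
      Pi.single_zero, sub_zero]
  have hshift : V x = fun r => V x' (r + c) := by
    funext r
    simp only [V, Pi.add_apply, hc_out, hc_in, add_zero, netInflow_add, hc_net]
    exact Prod.ext rfl (Prod.ext rfl (by abel_nf))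
  have hlaw := hindep.map_fun_eq_uniformOn_univ hmeas hunif
  rw [hV, hV, hshift]
  exact ((identDistrib_add_const_of_map_eq_uniformOn_univ (measurable_pi_iff.mpr hmeas) hlaw
    c).comp (measurable_of_countable (V x'))).map_eq
end

section
/- (Correctness of Secure-Inner-Product protocol 1.) Let p ≥ 1, n ≥ 1, and work in ZMod p. Suppose that for each i = 1,…,n the shares x_i(1), x_i(2), x_i(3) ∈ ZMod p satisfy x_i(1)+x_i(2)+x_i(3) = x_i and the shares y_i(1), y_i(2), y_i(3) ∈ ZMod p satisfy y_i(1)+y_i(2)+y_i(3) = y_i. Define p_i(1) = (x_i(1)+x_i(3))(y_i(1)+y_i(2)), p_i(2) = y_i(3)(x_i(1)+x_i(2)) + x_i(2)(y_i(1)+y_i(2)), p_i(3) = x_i(3)y_i(3), and ρ(m) = Σ_{i=1}^n p_i(m) for m = 1,2,3. Suppose further that for m = 1,2,3 the elements ρ(m,1), ρ(m,2), ρ(m,3) ∈ ZMod p satisfy ρ(m,1)+ρ(m,2)+ρ(m,3) = ρ(m), and set R(k) = Σ_{m=1}^3 ρ(m,k) for k = 1,2,3. Then R(1) + R(2) + R(3)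 = Σ_{i=1}^n x_i y_i in ZMod p. -/
/-- **Correctness of Secure-Inner-Product protocol 1.**
Each coordinate `x i` and `y i` is additively split into three shares in `ZMod p`; each
party `m` computes its local product contribution `pp i m` and `ρ m = ∑ i, pp i m`,
re-shares `ρ m` additively into `ρs m 1, ρs m 2, ρs m 3`, and each party `k` reveals
`R k = ∑ m, ρs m k`.  Then `R 1 + R 2 + R 3 = ∑ i, x i * y i`. -/
theorem secure_inner_product_1_correct (p n : ℕ) (hp : 1 ≤ p) (hn : 1 ≤ n)
    (x y : Fin n → ZMod p)
    (xs ys : Fin n → Fin 3 → ZMod p)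
    (hx : ∀ i, xs i 0 + xs i 1 + xs i 2 = x i)
    (hy : ∀ i, ys i 0 + ys i 1 + ys i 2 = y i)
    (pp : Fin n → Fin 3 → ZMod p)
    (hp1 : ∀ i, pp i 0 = (xs i 0 + xs i 2) * (ys i 0 + ys i 1))
    (hp2 : ∀ i, pp i 1 = ys i 2 * (xs i 0 + xs i 1) + xs i 1 * (ys i 0 + ys i 1))
    (hp3 : ∀ i, pp i 2 = xs i 2 * ys i 2)
    (ρ : Fin 3 → ZMod p) (hρ : ∀ m, ρ m = ∑ i, pp i m)
    (ρs : Fin 3 → Fin 3 → ZMod p)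
    (hρs : ∀ m, ρs m 0 + ρs m 1 + ρs m 2 = ρ m)
    (R : Fin 3 → ZMod p) (hR : ∀ k, R k = ∑ m, ρs m k) :
    R 0 + R 1 + R 2 = ∑ i, x i * y i := by
  simp only [hR, Fin.sum_univ_three]
  have : ∀ m, ρs m 0 + ρs m 1 + ρs m 2 = ∑ i, pp i m := fun m => (hρs m).trans (hρ m)
  calc ρs 0 0 + ρs 1 0 + ρs 2 0 + (ρs 0 1 + ρs 1 1 + ρs 2 1) + (ρs 0 2 + ρs 1 2 + ρs 2 2)
      = (ρs 0 0 + ρs 0 1 + ρs 0 2) + (ρs 1 0 + ρs 1 1 + ρs 1 2) + (ρs 2 0 + ρs 2 1 + ρs 2 2) := by ring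
    _ = (∑ i, pp i 0) + (∑ i, pp i 1) + (∑ i, pp i 2) := by rw [this 0, this 1, this 2]
    _ = ∑ i, (pp i 0 + pp i 1 + pp i 2) := by rw [← Finset.sum_add_distrib, ← Finset.sum_add_distrib]
    _ = ∑ i, x i * y i := by
        refine Finset.sum_congr rfl fun i _ => ?_
        rw [hp1 i, hp2 i, hp3 i, ← hx i, ← hy i]; ring
end

section
/- (Exactness of Secure-Inner-Product protocol 1 over the integers.) Let q ≥ 1, n ≥ 1, and let p be a prime with p > n·q^2. Let x_1,…,x_n and y_1,…,y_n be natural numbers with x_i < q and y_i < q for all i, and let x̄_i, ȳ_i ∈ ZMod p denote their images. Suppose shares and quantities are defined as in Secure-Inner-Product protocol 1: x_i(1)+x_i(2)+x_i(3) = x̄_i, y_i(1)+y_i(2)+y_i(3) = ȳ_i, p_i(1) = (x_i(1)+x_i(3))(y_i(1)+y_i(2)), p_i(2) = y_i(3)(x_i(1)+x_i(2)) + x_i(2)(y_i(1)+y_i(2)), p_i(3) = x_i(3)y_i(3), ρ(m) = Σ_i p_i(m), ρ(m,1)+ρ(m,2)+ρ(m,3) = ρ(m), and R(k) = Σ_m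 ρ(m,k). Then the canonical natural-number representative (val) of R(1)+R(2)+R(3) in ZMod p equals the integer inner product Σ_{i=1}^n x_i y_i. -/
/-- **Exactness of Secure-Inner-Product protocol 1 over the integers.**
With quantized inputs `x i, y i < q` embedded in `ZMod p` for a prime `p > n * q²`, the
protocol output `R 1 + R 2 + R 3`, read off via its canonical natural-number representative,
equals the true integer inner product `∑ i, x i * y i`. -/
theorem secure_inner_product_1_exact (q n p : ℕ) (hq : 1 ≤ q) (hn : 1 ≤ n)
    (hprime : p.Prime) (hpbig : n * q ^ 2 < p)
    (x y : Fin n → ℕ) (hx : ∀ i, x i < q) (hy : ∀ i, y i < q)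
    (xs ys : Fin n → Fin 3 → ZMod p)
    (hxs : ∀ i, xs i 0 + xs i 1 + xs i 2 = (x i : ZMod p))
    (hys : ∀ i, ys i 0 + ys i 1 + ys i 2 = (y i : ZMod p))
    (pp : Fin n → Fin 3 → ZMod p)
    (hp1 : ∀ i, pp i 0 = (xs i 0 + xs i 2) * (ys i 0 + ys i 1))
    (hp2 : ∀ i, pp i 1 = ys i 2 * (xs i 0 + xs i 1) + xs i 1 * (ys i 0 + ys i 1))
    (hp3 : ∀ i, pp i 2 = xs i 2 * ys i 2)
    (ρ : Fin 3 → ZMod p) (hρ : ∀ m, ρ m = ∑ i, pp i m)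
    (ρs : Fin 3 → Fin 3 → ZMod p)
    (hρs : ∀ m, ρs m 0 + ρs m 1 + ρs m 2 = ρ m)
    (R : Fin 3 → ZMod p) (hR : ∀ k, R k = ∑ m, ρs m k) :
    (R 0 + R 1 + R 2).val = ∑ i, x i * y i := by
  have key : R 0 + R 1 + R 2 = ((∑ i, x i * y i : ℕ) : ZMod p) := by
    have h1 : R 0 + R 1 + R 2 = ∑ i, ((x i : ZMod p) * (y i : ZMod p)) := by
      have : R 0 + R 1 + R 2 = ρ 0 + ρ 1 + ρ 2 := by
        simp only [hR, Fin.sum_univ_three, ← hρs]; ring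
      rw [this]
      simp only [hρ, ← Finset.sum_add_distrib]
      refine Finset.sum_congr rfl fun i _ => ?_
      rw [hp1, hp2, hp3, ← hxs i, ← hys i]
      ring
    rw [h1]
    push_cast
    rfl
  rw [key, ZMod.val_natCast_of_lt]
  calc ∑ i, x i * y i ≤ ∑ _i : Fin n, q * q := by
        exact Finset.sum_le_sum fun i _ =>
          Nat.mul_le_mul (Nat.le_of_lt (hx i)) (Nat.le_of_lt (hy i))
    _ = n * q ^ 2 := by simp [sq, mul_assoc]
    _ < p := hpbig
end

section
/- (Correctness of the OT_1^2 protocol.) Let p and q be distinct primes, n = p·q, and let e, d be natural numbers with e·d ≡ 1 (mod (p−1)·(q−1)). Let b_0, b_1 ∈ ZMod n be the sender's secrets, x_0, x_1 ∈ ZMod n the random numbers sent by the sender, i ∈ {0,1} the receiver's choice, and k ∈ ZMod n the receiver's random number. Define c = x_i + k^e, k_j = (c − x_j)^d for j = 0,1, and a_j = b_j + k_j. Then a_i − k = b_i; that is, the receiver correctly recovers the selected secret b_i. -/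
lemma pow_modeq_one_prime {p : ℕ} (hp : p.Prime) (m : ℕ) (hm : m ≠ 0)
    (h : m ≡ 1 [MOD p - 1]) (x : ZMod p) : x ^ m = x := by
  haveI : Fact p.Prime := ⟨hp⟩
  by_cases hx : x = 0
  · simp [hx, zero_pow hm]
  · have h1 : 1 ≤ m := Nat.one_le_iff_ne_zero.mpr hm
    obtain ⟨t, ht⟩ : (p - 1) ∣ (m - 1) := (Nat.modEq_iff_dvd' h1).mp h.symm
    have hm' : m = (p - 1) * t + 1 := by omega
    rw [hm', pow_add, pow_one, pow_mul, ZMod.pow_card_sub_one_eq_one hx, one_pow, one_mul]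

lemma pow_ed (p q : ℕ) (hp : p.Prime) (hq : q.Prime) (hpq : p ≠ q)
    (m : ℕ) (hm : m ≡ 1 [MOD (p - 1) * (q - 1)]) (y : ZMod (p * q)) :
    y ^ m = y := by
  have hcop : Nat.Coprime p q := (Nat.coprime_primes hp hq).mpr hpq
  have hm0 : m ≠ 0 := by
    rintro rfl
    have h1 : (p - 1) * (q - 1) ∣ 1 := by
      have := (Nat.modEq_iff_dvd' (by norm_num)).mp hm
      simpa using this
    rw [Nat.dvd_one] at h1
    have hp1 : p - 1 = 1 := Nat.dvd_one.mp ⟨q - 1, h1.symm⟩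
    have hq1 : q - 1 = 1 := Nat.dvd_one.mp ⟨p - 1, by rw [Nat.mul_comm (q-1) (p-1)]; exact h1.symm⟩
    have := hp.two_le; have := hq.two_le
    omega
  have hmp : m ≡ 1 [MOD p - 1] := hm.of_dvd ⟨q - 1, rfl⟩
  have hmq : m ≡ 1 [MOD q - 1] := hm.of_dvd ⟨p - 1, Nat.mul_comm _ _⟩
  have hiso := ZMod.chineseRemainder hcop
  apply hiso.injective
  rw [map_pow]
  have h1 : (hiso y ^ m).1 = (hiso y).1 := by
    rw [Prod.pow_fst]; exact pow_modeq_one_prime hp m hm0 hmp _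
  have h2 : (hiso y ^ m).2 = (hiso y).2 := by
    rw [Prod.pow_snd]; exact pow_modeq_one_prime hq m hm0 hmq _
  exact Prod.ext h1 h2

/-- **Correctness of the OT₁² protocol.**
With RSA keys as in the protocol (`n = p * q` for distinct primes, `e * d ≡ 1` modulo
`(p-1)*(q-1)`), sender's secrets `b 0, b 1`, sender's random numbers `x 0, x 1`, receiver's
choice `i` and random `k`: if `c = x i + k^e`, `kk j = (c - x j)^d`, and `a j = b j + kk j`,
then the receiver's output `a i - k` equals the selected secret `b i`. -/
theorem ot_correct (p q : ℕ) (hp : p.Prime) (hq : q.Prime) (hpq : p ≠ q)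
    (n : ℕ) (hn : n = p * q) (e d : ℕ)
    (hed : e * d ≡ 1 [MOD (p - 1) * (q - 1)])
    (b x : Fin 2 → ZMod n) (i : Fin 2) (k : ZMod n)
    (c : ZMod n) (hc : c = x i + k ^ e)
    (kk : Fin 2 → ZMod n) (hkk : ∀ j, kk j = (c - x j) ^ d)
    (a : Fin 2 → ZMod n) (ha : ∀ j, a j = b j + kk j) :
    a i - k = b i := by
  subst hn
  have hk : k ^ (e * d) = k := pow_ed p q hp hq hpq (e * d) hed k
  rw [ha, hkk, hc]
  have hx : x i + k ^ e - x i = k ^ e := by ring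
  rw [hx, ← pow_mul, hk]
  ring
end

section
/- (Exactness of Secure-Inner-Product protocol 3 over the integers.) Let q ≥ 1, n ≥ 1, and N = n·q^2. Let x_1,…,x_n and y_1,…,y_n be natural numbers with x_i < q and y_i < q for all i, with images x̄_i, ȳ_i in ZMod N. Suppose shares are given as in Secure-Inner-Product protocol 3: x̄_i = x_i(1) + x_i(2), ȳ_i = y_i(1) + y_i(2), b_i(1) = −b_i(2) + y_i(1)·x_i(2), a_i(2) = −a_i(1) + y_i(2)·x_i(1), p_i(1) = x_i(1)·y_i(1) + a_i(1) + b_i(1), p_i(2) = x_i(2)·y_i(2) + a_i(2) + b_i(2). Then the canonical natural-number representative (val) of Σ_i p_i(1) + Σ_i p_i(2) in ZMod N equals the integer inner product Σ_{i=1}^n x_i y_i. -/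
/-- **Exactness of Secure-Inner-Product protocol 3 over the integers.**
With quantized inputs `x i, y i < q` embedded in `ZMod N` for `N = n * q²`, the protocol
output `∑ i, p₁ i + ∑ i, p₂ i`, read off via its canonical natural-number representative,
equals the true integer inner product `∑ i, x i * y i`. -/
theorem secure_inner_product_3_exact (q n : ℕ) (hq : 1 ≤ q) (hn : 1 ≤ n)
    (N : ℕ) (hN : N = n * q ^ 2)
    (x y : Fin n → ℕ) (hx : ∀ i, x i < q) (hy : ∀ i, y i < q)
    (x₁ x₂ y₁ y₂ a₁ b₂ : Fin n → ZMod N)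
    (hxs : ∀ i, (x i : ZMod N) = x₁ i + x₂ i)
    (hys : ∀ i, (y i : ZMod N) = y₁ i + y₂ i)
    (b₁ a₂ : Fin n → ZMod N)
    (hb₁ : ∀ i, b₁ i = -(b₂ i) + y₁ i * x₂ i)
    (ha₂ : ∀ i, a₂ i = -(a₁ i) + y₂ i * x₁ i)
    (p₁ p₂ : Fin n → ZMod N)
    (hp₁ : ∀ i, p₁ i = x₁ i * y₁ i + a₁ i + b₁ i)
    (hp₂ : ∀ i, p₂ i = x₂ i * y₂ i + a₂ i + b₂ i) :
    (∑ i, p₁ i + ∑ i, p₂ i).val = ∑ i, x i * y i := by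
  have hsum : (∑ i, p₁ i + ∑ i, p₂ i) = ((∑ i, x i * y i : ℕ) : ZMod N) := by
    rw [← Finset.sum_add_distrib]
    push_cast
    refine Finset.sum_congr rfl fun i _ => ?_
    rw [hp₁ i, hp₂ i, hb₁ i, ha₂ i, hxs i, hys i]
    ring
  have hlt : ∑ i, x i * y i < N := by
    calc ∑ i, x i * y i ≤ ∑ _i : Fin n, (q - 1) * (q - 1) := by
          refine Finset.sum_le_sum fun i _ => ?_
          exact Nat.mul_le_mul (Nat.le_sub_one_of_lt (hx i)) (Nat.le_sub_one_of_lt (hy i))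
      _ = n * ((q - 1) * (q - 1)) := by simp [Finset.sum_const, mul_comm]
      _ < n * q ^ 2 := by
          have h1 : q - 1 < q := Nat.sub_lt hq one_pos
          have : (q - 1) * (q - 1) < q ^ 2 := by
            have := Nat.mul_lt_mul_of_lt_of_le h1 h1.le (Nat.lt_of_lt_of_le one_pos hq)
            simpa [sq] using this
          exact Nat.mul_lt_mul_of_le_of_lt le_rfl this hn
      _ = N := hN.symm
  rw [hsum, ZMod.val_natCast_of_lt hlt]
end
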